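/- Let p : ℝ → ℝ be continuous, let a, ρ : [t₀, T] → ℝ be continuously differentiable with a(t) > 0, a(t₀) = 1, ρ(t₀) = ρ₀ > 0, ρ(t) > 0 and s + p(s) > 0 for every s in the range of ρ, and suppose ρ'(t) = −3·(a'(t)/a(t))·(ρ(t) + p(ρ(t))) for all t. Define the enthalpy W(t) = exp( (1/3) ∫_{ρ₀}^{ρ(t)} ds / (s + p(s)) ). Let r_b > 0. If ρ(t) < (3 / r_b²) · W(t)² for all t ∈ [t₀, T], then for every t ∈ [t₀, T] and every r with 0 < r ≤ r_b one has r² · ρ(t) · a(t)² / 3 < 1; that is, no shell of the collapsing cloud is ever trapped. -/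

import Mathlib

/-!
Along the flow the continuity equation says `ρ̇ / (3 (ρ + p(ρ))) = -ȧ / a`, i.e. the
logarithmic derivative of the enthalpy `W(ρ(t))` is that of `1 / a`. With `a(t₀) = 1` and
`W(ρ₀) = 1` this gives `W = 1 / a`, so the enthalpy bound `ρ < 3 W² / r_b²` is exactly
`r_b² ρ a² / 3 < 1`, the untrapping condition of the boundary shell, and inner shells
`r ≤ r_b` follow.
-/

open Real Set MeasureTheory intervalIntegral

section EnthalpyConservation

variable {h a ρ a' ρ' : ℝ → ℝ} {t₀ T : ℝ}

theorem intervalIntegrable_one_div_comp_of_ne_zero (hh : Continuous h)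
    (hρ : ContinuousOn ρ (Icc t₀ T)) (hne : ∀ t ∈ Icc t₀ T, h (ρ t) ≠ 0)
    {t : ℝ} (ht : t ∈ Icc t₀ T) :
    IntervalIntegrable (fun s => 1 / h s) volume (ρ t₀) (ρ t) := by
  have hsub : uIcc t₀ t ⊆ Icc t₀ T := by
    rw [uIcc_of_le ht.1]
    exact Icc_subset_Icc_right ht.2
  refine ContinuousOn.intervalIntegrable fun s hs => ?_
  obtain ⟨u, hu, rfl⟩ := intermediate_value_uIcc (hρ.mono hsub) hs
  exact (continuousAt_const.div hh.continuousAt (hne u (hsub hu))).continuousWithinAt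

theorem hasDerivAt_integral_one_div_add_log_eq_zero (hh : Continuous h)
    (ha : ∀ t ∈ Icc t₀ T, HasDerivAt a (a' t) t)
    (hρ : ∀ t ∈ Icc t₀ T, HasDerivAt ρ (ρ' t) t)
    (hapos : ∀ t ∈ Icc t₀ T, 0 < a t)
    (hne : ∀ t ∈ Icc t₀ T, h (ρ t) ≠ 0)
    (hcont : ∀ t ∈ Icc t₀ T, ρ' t = -3 * (a' t / a t) * h (ρ t))
    {t : ℝ} (ht : t ∈ Icc t₀ T) :
    HasDerivAt (fun u => (1 / 3) * (∫ s in ρ t₀..ρ u, 1 / h s) + log (a u)) 0 t := by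
  have hρc : ContinuousOn ρ (Icc t₀ T) := fun u hu =>
    (hρ u hu).continuousAt.continuousWithinAt
  have hcontAt : ContinuousAt (fun s => 1 / h s) (ρ t) :=
    continuousAt_const.div hh.continuousAt (hne t ht)
  have hint : HasDerivAt (fun u => ∫ s in ρ t₀..ρ u, 1 / h s) (1 / h (ρ t) * ρ' t) t :=
    (integral_hasDerivAt_right (intervalIntegrable_one_div_comp_of_ne_zero hh hρc hne ht)
      (measurable_const.div hh.measurable).stronglyMeasurable.stronglyMeasurableAtFilter
      hcontAt).comp t (hρ t ht)
  have hlog : HasDerivAt (fun u => log (a u)) (a' t / a t) t :=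
    (ha t ht).log (hapos t ht).ne'
  refine ((hint.const_mul (1 / 3 : ℝ)).add hlog).congr_deriv ?_
  rw [hcont t ht]
  field_simp [hne t ht, (hapos t ht).ne']
  ring

theorem exp_integral_one_div_eq_div (hh : Continuous h)
    (ha : ∀ t ∈ Icc t₀ T, HasDerivAt a (a' t) t)
    (hρ : ∀ t ∈ Icc t₀ T, HasDerivAt ρ (ρ' t) t)
    (hapos : ∀ t ∈ Icc t₀ T, 0 < a t)
    (hne : ∀ t ∈ Icc t₀ T, h (ρ t) ≠ 0)
    (hcont : ∀ t ∈ Icc t₀ T, ρ' t = -3 * (a' t / a t) * h (ρ t))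
    {t : ℝ} (ht : t ∈ Icc t₀ T) :
    exp ((1 / 3) * ∫ s in ρ t₀..ρ t, 1 / h s) = a t₀ / a t := by
  have hderiv := fun u (hu : u ∈ Icc t₀ T) =>
    hasDerivAt_integral_one_div_add_log_eq_zero hh ha hρ hapos hne hcont hu
  have hconst := constant_of_has_deriv_right_zero
    (fun u hu => (hderiv u hu).continuousAt.continuousWithinAt)
    (fun u hu => (hderiv u (Ico_subset_Icc_self hu)).hasDerivWithinAt) t ht
  simp only [integral_same, mul_zero, zero_add] at hconst
  have ht₀ : t₀ ∈ Icc t₀ T := left_mem_Icc.mpr (ht.1.trans ht.2)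
  rw [eq_sub_of_add_eq hconst, ← log_div (hapos t₀ ht₀).ne' (hapos t ht).ne',
    exp_log (div_pos (hapos t₀ ht₀) (hapos t ht))]

end EnthalpyConservation

theorem sq_mul_div_three_lt_one {r r_b x : ℝ} (hr : 0 < r) (hrr_b : r ≤ r_b)
    (hx : x < 3 / r_b ^ 2) : r ^ 2 * x / 3 < 1 := by
  have hr_b : 0 < r_b ^ 2 := pow_pos (hr.trans_le hrr_b) 2
  have hr2 : r ^ 2 ≤ r_b ^ 2 := pow_le_pow_left₀ hr.le hrr_b 2
  rw [lt_div_iff₀ hr_b] at hx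
  rcases le_or_gt x 0 with hx0 | hx0
  · nlinarith [sq_nonneg r]
  · nlinarith

theorem no_trapping_from_enthalpy_bound_general
    (p : ℝ → ℝ) (hp : Continuous p)
    (t₀ T : ℝ)
    (a ρ a' ρ' : ℝ → ℝ)
    (ha : ∀ t ∈ Set.Icc t₀ T, HasDerivAt a (a' t) t)
    (hρ : ∀ t ∈ Set.Icc t₀ T, HasDerivAt ρ (ρ' t) t)
    (hapos : ∀ t ∈ Set.Icc t₀ T, 0 < a t)
    (ρ₀ : ℝ) (ha0 : a t₀ = 1) (hρ0 : ρ t₀ = ρ₀)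
    (hpos : ∀ t ∈ Set.Icc t₀ T, 0 < ρ t + p (ρ t))
    (hcont : ∀ t ∈ Set.Icc t₀ T,
      ρ' t = -3 * (a' t / a t) * (ρ t + p (ρ t)))
    (r_b : ℝ)
    (W : ℝ → ℝ)
    (hW : ∀ t ∈ Set.Icc t₀ T,
      W t = Real.exp ((1/3) * ∫ s in ρ₀..(ρ t), 1 / (s + p s)))
    (hbound : ∀ t ∈ Set.Icc t₀ T, ρ t < 3 / r_b ^ 2 * (W t) ^ 2) :
    ∀ t ∈ Set.Icc t₀ T, ∀ r : ℝ, 0 < r → r ≤ r_b →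
      r ^ 2 * ρ t * (a t) ^ 2 / 3 < 1 := by
  intro t ht r hr hrr_b
  have hWt : W t = (a t)⁻¹ := by
    rw [hW t ht, ← hρ0, exp_integral_one_div_eq_div (h := fun s => s + p s)
      (continuous_id.add hp) ha hρ hapos (fun u hu => (hpos u hu).ne') hcont ht, ha0, one_div]
  have hρa := hbound t ht
  rw [hWt, inv_pow, ← div_eq_mul_inv, lt_div_iff₀ (pow_pos (hapos t ht) 2)] at hρa
  simpa only [mul_assoc] using sq_mul_div_three_lt_one hr hrr_b hρa

/-- If the density of a homogeneous collapsing perfect fluid is strictly bounded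
    by (3/r_b²)·W² where W is the matter enthalpy, then no shell r ≤ r_b is
    ever trapped: r²·ρ·a²/3 < 1. -/
theorem no_trapping_from_enthalpy_bound
    (p : ℝ → ℝ) (hp : Continuous p)
    (t₀ T : ℝ) (hT : t₀ ≤ T)
    (a ρ a' ρ' : ℝ → ℝ)
    (ha : ∀ t ∈ Set.Icc t₀ T, HasDerivAt a (a' t) t)
    (hρ : ∀ t ∈ Set.Icc t₀ T, HasDerivAt ρ (ρ' t) t)
    (ha' : ContinuousOn a' (Set.Icc t₀ T))
    (hρ' : ContinuousOn ρ' (Set.Icc t₀ T))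
    (hapos : ∀ t ∈ Set.Icc t₀ T, 0 < a t)
    (ρ₀ : ℝ) (ha0 : a t₀ = 1) (hρ0 : ρ t₀ = ρ₀) (hρ0pos : 0 < ρ₀)
    (hρpos : ∀ t ∈ Set.Icc t₀ T, 0 < ρ t)
    (hpos : ∀ t ∈ Set.Icc t₀ T, 0 < ρ t + p (ρ t))
    (hcont : ∀ t ∈ Set.Icc t₀ T,
      ρ' t = -3 * (a' t / a t) * (ρ t + p (ρ t)))
    (r_b : ℝ) (hrb : 0 < r_b)
    (W : ℝ → ℝ)
    (hW : ∀ t ∈ Set.Icc t₀ T,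
      W t = Real.exp ((1/3) * ∫ s in ρ₀..(ρ t), 1 / (s + p s)))
    (hbound : ∀ t ∈ Set.Icc t₀ T, ρ t < 3 / r_b ^ 2 * (W t) ^ 2) :
    ∀ t ∈ Set.Icc t₀ T, ∀ r : ℝ, 0 < r → r ≤ r_b →
      r ^ 2 * ρ t * (a t) ^ 2 / 3 < 1 :=
  no_trapping_from_enthalpy_bound_general p hp t₀ T a ρ a' ρ' ha hρ hapos ρ₀ ha0 hρ0 hpos hcont r_b
    W hW hbound
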